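/- arXiv:math/0312050 — 3 statements merged into one kernel-verified Lean document; each statement's English description precedes it below -/
import Mathlib

section
/- Let ABCD be a convex quadrilateral whose Delaunay triangulation uses diagonal BD. Then R_{ABD} + R_{BCD} < R_{ABC} + R_{ACD}, where R_{XYZ} denotes the circumradius of triangle XYZ. -/
set_option maxHeartbeats 1000000

/-- Counterclockwise orientation predicate for three planar points. -/
def ccw (A B C : EuclideanSpace ℝ (Fin 2)) : Prop :=
  0 < (B 0 - A 0) * (C 1 - A 1) - (B 1 - A 1) * (C 0 - A 0)

/-- The circumradius of the triangle `XYZ`. -/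
noncomputable def circumRad {A B C : EuclideanSpace ℝ (Fin 2)}
    (h : AffineIndependent ℝ ![A, B, C]) : ℝ :=
  (⟨![A, B, C], h⟩ : Affine.Simplex ℝ (EuclideanSpace ℝ (Fin 2)) 2).circumradius

/-- The circumcenter of the triangle `XYZ`. -/
noncomputable def circumCtr {A B C : EuclideanSpace ℝ (Fin 2)}
    (h : AffineIndependent ℝ ![A, B, C]) : EuclideanSpace ℝ (Fin 2) :=
  (⟨![A, B, C], h⟩ : Affine.Simplex ℝ (EuclideanSpace ℝ (Fin 2)) 2).circumcenter

lemma dist_sq_coords (x y : EuclideanSpace ℝ (Fin 2)) :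
    dist x y ^ 2 = (x 0 - y 0) ^ 2 + (x 1 - y 1) ^ 2 := by
  have h : dist x y ^ 2 = ∑ i : Fin 2, dist (x i) (y i) ^ 2 := by
    rw [EuclideanSpace.dist_eq, Real.sq_sqrt (by positivity)]
  rw [h, Fin.sum_univ_two, Real.dist_eq, Real.dist_eq, sq_abs, sq_abs]

lemma circum_dists {A B C : EuclideanSpace ℝ (Fin 2)} (h : AffineIndependent ℝ ![A, B, C]) :
    dist A (circumCtr h) = circumRad h ∧ dist B (circumCtr h) = circumRad h ∧
      dist C (circumCtr h) = circumRad h := by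
  refine ⟨?_, ?_, ?_⟩
  · exact (⟨![A, B, C], h⟩ :
      Affine.Simplex ℝ (EuclideanSpace ℝ (Fin 2)) 2).dist_circumcenter_eq_circumradius 0
  · exact (⟨![A, B, C], h⟩ :
      Affine.Simplex ℝ (EuclideanSpace ℝ (Fin 2)) 2).dist_circumcenter_eq_circumradius 1
  · exact (⟨![A, B, C], h⟩ :
      Affine.Simplex ℝ (EuclideanSpace ℝ (Fin 2)) 2).dist_circumcenter_eq_circumradius 2

lemma circumRad_nonneg {A B C : EuclideanSpace ℝ (Fin 2)} (h : AffineIndependent ℝ ![A, B, C]) :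
    0 ≤ circumRad h :=
  (⟨![A, B, C], h⟩ : Affine.Simplex ℝ (EuclideanSpace ℝ (Fin 2)) 2).circumradius_nonneg

/-- Core comparison lemma. -/
lemma radius_lt (ax ay bx by_ qx qy ox oy px py r r' : ℝ)
    (hOA : (ox - ax) ^ 2 + (oy - ay) ^ 2 = r ^ 2)
    (hOB : (ox - bx) ^ 2 + (oy - by_) ^ 2 = r ^ 2)
    (hPA : (px - ax) ^ 2 + (py - ay) ^ 2 = r' ^ 2)
    (hPB : (px - bx) ^ 2 + (py - by_) ^ 2 = r' ^ 2)
    (hQP : (qx - px) ^ 2 + (qy - py) ^ 2 = r' ^ 2)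
    (hQO : (qx - ox) ^ 2 + (qy - oy) ^ 2 > r ^ 2)
    (hcross : 0 < (bx - ax) * (qy - ay) - (by_ - ay) * (qx - ax))
    (hT : 0 ≤ (bx - ax) * (oy - ay) - (by_ - ay) * (ox - ax))
    (hr : 0 ≤ r) (hr' : 0 ≤ r') : r < r' := by
  have hu : 0 < (bx - ax) ^ 2 + (by_ - ay) ^ 2 := by
    rcases eq_or_lt_of_le (by positivity : (0:ℝ) ≤ (bx - ax) ^ 2 + (by_ - ay) ^ 2) with h | h
    · exfalso
      have h1 : bx - ax = 0 := by nlinarith [sq_nonneg (bx - ax), sq_nonneg (by_ - ay)]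
      have h2 : by_ - ay = 0 := by nlinarith [sq_nonneg (bx - ax), sq_nonneg (by_ - ay)]
      have : (bx - ax) * (qy - ay) - (by_ - ay) * (qx - ax) = 0 := by rw [h1, h2]; ring
      linarith
    · exact h
  have hperp : (ox - px) * (bx - ax) + (oy - py) * (by_ - ay) = 0 := by
    linear_combination (hOA - hOB - hPA + hPB) / 2
  have hstep1 : 0 < (px - ox) * (qx - ax) + (py - oy) * (qy - ay) := by
    linarith [hQO, hQP, hPA, hOA]
  have hSc : ((bx - ax) * (py - oy) - (by_ - ay) * (px - ox)) *
      ((bx - ax) * (qy - ay) - (by_ - ay) * (qx - ax)) =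
      ((px - ox) * (qx - ax) + (py - oy) * (qy - ay)) *
        ((bx - ax) ^ 2 + (by_ - ay) ^ 2) := by
    linear_combination ((bx - ax) * (qx - ax) + (by_ - ay) * (qy - ay)) * hperp
  have hS : 0 < (bx - ax) * (py - oy) - (by_ - ay) * (px - ox) := by
    have hpos : 0 < ((bx - ax) * (py - oy) - (by_ - ay) * (px - ox)) *
        ((bx - ax) * (qy - ay) - (by_ - ay) * (qx - ax)) := by
      rw [hSc]; exact mul_pos hstep1 hu
    by_contra hcon
    push_neg at hcon
    have h5 : ((bx - ax) * (py - oy) - (by_ - ay) * (px - ox)) *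
        ((bx - ax) * (qy - ay) - (by_ - ay) * (qx - ax)) ≤ 0 :=
      mul_nonpos_iff.mpr (Or.inr ⟨hcon, hcross.le⟩)
    linarith
  have h3 : (r' ^ 2 - r ^ 2) * ((bx - ax) ^ 2 + (by_ - ay) ^ 2) =
      ((bx - ax) * (py - oy) - (by_ - ay) * (px - ox)) *
        (2 * ((bx - ax) * (oy - ay) - (by_ - ay) * (ox - ax)) +
          ((bx - ax) * (py - oy) - (by_ - ay) * (px - ox))) := by
    linear_combination (-((bx - ax) ^ 2 + (by_ - ay) ^ 2)) * hPA +
      ((bx - ax) ^ 2 + (by_ - ay) ^ 2) * hOA -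
      ((bx - ax) * (px + ox - 2 * ax) + (by_ - ay) * (py + oy - 2 * ay)) * hperp
  set S := (bx - ax) * (py - oy) - (by_ - ay) * (px - ox) with hSdef
  set T := (bx - ax) * (oy - ay) - (by_ - ay) * (ox - ax) with hTdef
  set U := (bx - ax) ^ 2 + (by_ - ay) ^ 2 with hUdef
  have hrhs : 0 < S * (2 * T + S) := by nlinarith [mul_pos hS hS, mul_nonneg hS.le hT]
  have hrr : r ^ 2 < r' ^ 2 := by
    by_contra hcon
    push_neg at hcon
    have h6 : (r' ^ 2 - r ^ 2) * U ≤ 0 :=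
      mul_nonpos_iff.mpr (Or.inr ⟨by linarith, hu.le⟩)
    linarith
  nlinarith [hrr, hr, hr']

/-- Bridge: non-obtuse apex angle implies circumcenter on the nonnegative side of the base. -/
lemma center_side (ax ay bx by_ dx dy ox oy r : ℝ)
    (hOA : (ox - ax) ^ 2 + (oy - ay) ^ 2 = r ^ 2)
    (hOB : (ox - bx) ^ 2 + (oy - by_) ^ 2 = r ^ 2)
    (hOD : (ox - dx) ^ 2 + (oy - dy) ^ 2 = r ^ 2)
    (hJ : 0 < (bx - ax) * (dy - ay) - (by_ - ay) * (dx - ax))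
    (hdot : 0 ≤ (ax - dx) * (bx - dx) + (ay - dy) * (by_ - dy)) :
    0 ≤ (bx - ax) * (oy - ay) - (by_ - ay) * (ox - ax) := by
  have c1 : 2 * ((dx - ox) * (ax - dx) + (dy - oy) * (ay - dy)) +
      ((ax - dx) ^ 2 + (ay - dy) ^ 2) = 0 := by linear_combination hOA - hOD
  have c2 : 2 * ((dx - ox) * (bx - dx) + (dy - oy) * (by_ - dy)) +
      ((bx - dx) ^ 2 + (by_ - dy) ^ 2) = 0 := by linear_combination hOB - hOD
  have hkey : 2 * ((bx - ax) * (dy - ay) - (by_ - ay) * (dx - ax)) *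
      ((bx - ax) * (oy - ay) - (by_ - ay) * (ox - ax)) =
      ((ax - dx) * (bx - dx) + (ay - dy) * (by_ - dy)) *
        ((ax - bx) ^ 2 + (ay - by_) ^ 2) := by
    linear_combination
      ((bx - dx) ^ 2 + (by_ - dy) ^ 2 -
        ((ax - dx) * (bx - dx) + (ay - dy) * (by_ - dy))) * c1 +
      ((ax - dx) ^ 2 + (ay - dy) ^ 2 -
        ((ax - dx) * (bx - dx) + (ay - dy) * (by_ - dy))) * c2
  have hQ : (0:ℝ) ≤ (ax - bx) ^ 2 + (ay - by_) ^ 2 := by positivity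
  set J := (bx - ax) * (dy - ay) - (by_ - ay) * (dx - ax) with hJdef
  set T := (bx - ax) * (oy - ay) - (by_ - ay) * (ox - ax) with hTdef
  set W := (ax - dx) * (bx - dx) + (ay - dy) * (by_ - dy) with hWdef
  set Q := (ax - bx) ^ 2 + (ay - by_) ^ 2 with hQdef
  by_contra hcon
  push_neg at hcon
  have h6 : 0 < J * (-T) := mul_pos hJ (by linarith)
  nlinarith [hkey, h6, mul_nonneg hdot hQ]

/-- Two vectors straddling `u` in ccw order (total turn `< π`) cannot both be obtuse to `u`. -/
lemma vertex_excl (vx vy ux uy wx wy : ℝ)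
    (h1 : 0 < vx * uy - vy * ux) (h2 : 0 < ux * wy - uy * wx)
    (h3 : 0 < vx * wy - vy * wx)
    (h4 : vx * ux + vy * uy < 0) (h5 : ux * wx + uy * wy < 0) : False := by
  have hu : 0 < ux ^ 2 + uy ^ 2 := by
    rcases eq_or_lt_of_le (by positivity : (0:ℝ) ≤ ux ^ 2 + uy ^ 2) with h | h
    · exfalso
      have e1 : ux = 0 := by nlinarith [sq_nonneg ux, sq_nonneg uy]
      have e2 : uy = 0 := by nlinarith [sq_nonneg ux, sq_nonneg uy]
      have : vx * uy - vy * ux = 0 := by rw [e1, e2]; ring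
      linarith
    · exact h
  have t1 : (vx * uy - vy * ux) * (ux * wx + uy * wy) < 0 := mul_neg_of_pos_of_neg h1 h5
  have t2 : (vx * ux + vy * uy) * (ux * wy - uy * wx) < 0 := mul_neg_of_neg_of_pos h4 h2
  have t3 : 0 < (vx * wy - vy * wx) * (ux ^ 2 + uy ^ 2) := mul_pos h3 hu
  nlinarith [t1, t2, t3]

/-- The master inequality over plain reals. -/
lemma master (ax ay bx by_ cx cy dx dy o1x o1y o2x o2y p1x p1y p2x p2y r1 r2 ra rb : ℝ)
    (h1a : (o1x - ax) ^ 2 + (o1y - ay) ^ 2 = r1 ^ 2)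
    (h1b : (o1x - bx) ^ 2 + (o1y - by_) ^ 2 = r1 ^ 2)
    (h1d : (o1x - dx) ^ 2 + (o1y - dy) ^ 2 = r1 ^ 2)
    (h2b : (o2x - bx) ^ 2 + (o2y - by_) ^ 2 = r2 ^ 2)
    (h2c : (o2x - cx) ^ 2 + (o2y - cy) ^ 2 = r2 ^ 2)
    (h2d : (o2x - dx) ^ 2 + (o2y - dy) ^ 2 = r2 ^ 2)
    (hpa : (p1x - ax) ^ 2 + (p1y - ay) ^ 2 = ra ^ 2)
    (hpb : (p1x - bx) ^ 2 + (p1y - by_) ^ 2 = ra ^ 2)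
    (hpc : (p1x - cx) ^ 2 + (p1y - cy) ^ 2 = ra ^ 2)
    (hqa : (p2x - ax) ^ 2 + (p2y - ay) ^ 2 = rb ^ 2)
    (hqc : (p2x - cx) ^ 2 + (p2y - cy) ^ 2 = rb ^ 2)
    (hqd : (p2x - dx) ^ 2 + (p2y - dy) ^ 2 = rb ^ 2)
    (hr1 : 0 ≤ r1) (hr2 : 0 ≤ r2) (hra : 0 ≤ ra) (hrb : 0 ≤ rb)
    (hDelC : (cx - o1x) ^ 2 + (cy - o1y) ^ 2 > r1 ^ 2)
    (hDelA : (ax - o2x) ^ 2 + (ay - o2y) ^ 2 > r2 ^ 2)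
    (cABC : 0 < (bx - ax) * (cy - ay) - (by_ - ay) * (cx - ax))
    (cBCD : 0 < (cx - bx) * (dy - by_) - (cy - by_) * (dx - bx))
    (cCDA : 0 < (dx - cx) * (ay - cy) - (dy - cy) * (ax - cx))
    (cDAB : 0 < (ax - dx) * (by_ - dy) - (ay - dy) * (bx - dx)) :
    r1 + r2 < ra + rb := by
  -- flipped forms of the circle equations
  have hpa' : (ax - p1x) ^ 2 + (ay - p1y) ^ 2 = ra ^ 2 := by linear_combination hpa
  have hpc' : (cx - p1x) ^ 2 + (cy - p1y) ^ 2 = ra ^ 2 := by linear_combination hpc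
  have hqa' : (ax - p2x) ^ 2 + (ay - p2y) ^ 2 = rb ^ 2 := by linear_combination hqa
  have hqc' : (cx - p2x) ^ 2 + (cy - p2y) ^ 2 = rb ^ 2 := by linear_combination hqc
  -- orientations of the four triangles in other cyclic forms
  have cABD : 0 < (bx - ax) * (dy - ay) - (by_ - ay) * (dx - ax) := by linarith [cDAB]
  have cCDB : 0 < (dx - cx) * (by_ - cy) - (dy - cy) * (bx - cx) := by linarith [cBCD]
  have cDAC : 0 < (ax - dx) * (cy - dy) - (ay - dy) * (cx - dx) := by linarith [cCDA]
  have cBCA : 0 < (cx - bx) * (ay - by_) - (cy - by_) * (ax - bx) := by linarith [cABC]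
  have cDBC : 0 < (bx - dx) * (cy - dy) - (by_ - dy) * (cx - dx) := by linarith [cBCD]
  have cBDA : 0 < (dx - bx) * (ay - by_) - (dy - by_) * (ax - bx) := by linarith [cDAB]
  by_cases hcase : 0 ≤ (ax - dx) * (bx - dx) + (ay - dy) * (by_ - dy) ∧
      0 ≤ (cx - bx) * (dx - bx) + (cy - by_) * (dy - by_)
  · obtain ⟨hd1, hd4⟩ := hcase
    have hT1 : 0 ≤ (bx - ax) * (o1y - ay) - (by_ - ay) * (o1x - ax) :=
      center_side ax ay bx by_ dx dy o1x o1y r1 h1a h1b h1d cABD hd1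
    have k1 : r1 < ra :=
      radius_lt ax ay bx by_ cx cy o1x o1y p1x p1y r1 ra h1a h1b hpa hpb hpc' hDelC cABC
        hT1 hr1 hra
    have hT4 : 0 ≤ (dx - cx) * (o2y - cy) - (dy - cy) * (o2x - cx) :=
      center_side cx cy dx dy bx by_ o2x o2y r2 h2c h2d h2b cCDB hd4
    have k2 : r2 < rb :=
      radius_lt cx cy dx dy ax ay o2x o2y p2x p2y r2 rb h2c h2d hqc hqd hqa' hDelA cCDA
        hT4 hr2 hrb
    linarith
  · have hd23 : 0 ≤ (dx - bx) * (ax - bx) + (dy - by_) * (ay - by_) ∧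
        0 ≤ (bx - dx) * (cx - dx) + (by_ - dy) * (cy - dy) := by
      rcases not_and_or.mp hcase with h | h
      · have hd1 : (ax - dx) * (bx - dx) + (ay - dy) * (by_ - dy) < 0 := not_le.mp h
        constructor
        · linarith [hd1, sq_nonneg (bx - dx), sq_nonneg (by_ - dy)]
        · by_contra hlt
          have hd3 : (bx - dx) * (cx - dx) + (by_ - dy) * (cy - dy) < 0 := not_le.mp hlt
          exact vertex_excl (ax - dx) (ay - dy) (bx - dx) (by_ - dy) (cx - dx) (cy - dy)
            cDAB cDBC cDAC hd1 hd3
      · have hd4 : (cx - bx) * (dx - bx) + (cy - by_) * (dy - by_) < 0 := not_le.mp h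
        constructor
        · by_contra hlt
          have hd2 : (dx - bx) * (ax - bx) + (dy - by_) * (ay - by_) < 0 := not_le.mp hlt
          exact vertex_excl (cx - bx) (cy - by_) (dx - bx) (dy - by_) (ax - bx) (ay - by_)
            cBCD cBDA cBCA hd4 hd2
        · linarith [hd4, sq_nonneg (bx - dx), sq_nonneg (by_ - dy)]
    obtain ⟨hd2, hd3⟩ := hd23
    have hT2 : 0 ≤ (ax - dx) * (o1y - dy) - (ay - dy) * (o1x - dx) :=
      center_side dx dy ax ay bx by_ o1x o1y r1 h1d h1a h1b cDAB hd2
    have k1 : r1 < rb :=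
      radius_lt dx dy ax ay cx cy o1x o1y p2x p2y r1 rb h1d h1a hqd hqa hqc' hDelC cDAC
        hT2 hr1 hrb
    have hT3 : 0 ≤ (cx - bx) * (o2y - by_) - (cy - by_) * (o2x - bx) :=
      center_side bx by_ cx cy dx dy o2x o2y r2 h2b h2c h2d cBCD hd3
    have k2 : r2 < ra :=
      radius_lt bx by_ cx cy ax ay o2x o2y p1x p1y r2 ra h2b h2c hpb hpc hpa' hDelA cBCA
        hT3 hr2 hra
    linarith

/-- If the Delaunay triangulation of a convex quadrilateral `ABCD` uses diagonal `BD`,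
then `R_ABD + R_BCD < R_ABC + R_ACD`. -/
theorem delaunay_circumradii_sum_lt (A B C D : EuclideanSpace ℝ (Fin 2))
    (hconv : ccw A B C ∧ ccw B C D ∧ ccw C D A ∧ ccw D A B)
    (hABC : AffineIndependent ℝ ![A, B, C]) (hACD : AffineIndependent ℝ ![A, C, D])
    (hABD : AffineIndependent ℝ ![A, B, D]) (hBCD : AffineIndependent ℝ ![B, C, D])
    (hDel₁ : dist C (circumCtr hABD) > circumRad hABD)
    (hDel₂ : dist A (circumCtr hBCD) > circumRad hBCD) :
    circumRad hABD + circumRad hBCD < circumRad hABC + circumRad hACD := by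
  obtain ⟨c1, c2, c3, c4⟩ := hconv
  simp only [ccw] at c1 c2 c3 c4
  obtain ⟨e1a, e1b, e1d⟩ := circum_dists hABD
  obtain ⟨e2b, e2c, e2d⟩ := circum_dists hBCD
  obtain ⟨epa, epb, epc⟩ := circum_dists hABC
  obtain ⟨eqa, eqc, eqd⟩ := circum_dists hACD
  have hr1 := circumRad_nonneg hABD
  have hr2 := circumRad_nonneg hBCD
  have hra := circumRad_nonneg hABC
  have hrb := circumRad_nonneg hACD
  have sq_of : ∀ (x y : EuclideanSpace ℝ (Fin 2)) (r : ℝ), dist x y = r →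
      (y 0 - x 0) ^ 2 + (y 1 - x 1) ^ 2 = r ^ 2 := by
    intro x y r h
    have h2 := dist_sq_coords x y
    rw [h] at h2
    linarith [h2]
  have gt_of : ∀ (x y : EuclideanSpace ℝ (Fin 2)) (r : ℝ), 0 ≤ r → dist x y > r →
      (x 0 - y 0) ^ 2 + (x 1 - y 1) ^ 2 > r ^ 2 := by
    intro x y r hr h
    have h2 := dist_sq_coords x y
    have h3 : 0 < dist x y + r := by linarith [dist_nonneg (x := x) (y := y)]
    have h4 : 0 < (dist x y + r) * (dist x y - r) := mul_pos h3 (by linarith)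
    nlinarith [h2, h4]
  exact master (A 0) (A 1) (B 0) (B 1) (C 0) (C 1) (D 0) (D 1)
    (circumCtr hABD 0) (circumCtr hABD 1) (circumCtr hBCD 0) (circumCtr hBCD 1)
    (circumCtr hABC 0) (circumCtr hABC 1) (circumCtr hACD 0) (circumCtr hACD 1)
    (circumRad hABD) (circumRad hBCD) (circumRad hABC) (circumRad hACD)
    (sq_of A _ _ e1a) (sq_of B _ _ e1b) (sq_of D _ _ e1d)
    (sq_of B _ _ e2b) (sq_of C _ _ e2c) (sq_of D _ _ e2d)
    (sq_of A _ _ epa) (sq_of B _ _ epb) (sq_of C _ _ epc)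
    (sq_of A _ _ eqa) (sq_of C _ _ eqc) (sq_of D _ _ eqd)
    hr1 hr2 hra hrb
    (gt_of C _ _ hr1 hDel₁) (gt_of A _ _ hr2 hDel₂)
    c1 c2 c3 c4
end

section
/- Let ABCD be a convex quadrilateral in ℝ² with Delaunay diagonal BD, and let Y = (y_A, y_B, y_C, y_D) be real values at the vertices. For a triangulation t, let f_t be the piecewise-linear interpolant of Y over t and DF(t, Y) = ∫_Q ‖∇f_t‖² dx. Then DF(t_{BD}, Y) ≤ DF(t_{AC}, Y) for every Y. -/
/-!
Cramer's rule gives the gradient of every affine piece, so both energies are rational functions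
of the vertices and the values. Writing `S_XYZ` for twice the signed area of `XYZ`, their
difference factorises as
`2 S_ABC S_ACD S_ABD S_BCD (DF(t_AC) - DF(t_BD)) = I (yA S_BCD - yB S_ACD + yC S_ABD - yD S_ABC)²`,
where the squared factor vanishes exactly when the data are affine and `I` tests `C` against the
circle through `A, B, D`: for that circle `(O, r)` one has `I = S_ABD (|C - O|² - r²)`, which is
nonnegative when `BD` is Delaunay.
-/

open RealInnerProductSpace

/-- The area of the planar triangle `ABC`. -/
noncomputable def triArea (A B C : EuclideanSpace ℝ (Fin 2)) : ℝ :=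
  |((B 0 - A 0) * (C 1 - A 1) - (B 1 - A 1) * (C 0 - A 0))| / 2

/-- `g` is the (constant) gradient of the affine map `f`. -/
def IsGradient (f : EuclideanSpace ℝ (Fin 2) →ᵃ[ℝ] ℝ) (g : EuclideanSpace ℝ (Fin 2)) : Prop :=
  ∀ v, f.linear v = ⟪g, v⟫

local notation "ℝ²" => EuclideanSpace ℝ (Fin 2)

def cross (u v : ℝ²) : ℝ := u 0 * v 1 - u 1 * v 0

lemma ccw_iff_cross {P Q R : ℝ²} : ccw P Q R ↔ 0 < cross (Q - P) (R - P) := Iff.rfl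

lemma triArea_eq_abs_cross (P Q R : ℝ²) : triArea P Q R = |cross (Q - P) (R - P)| / 2 := rfl

lemma ccw.rotate {P Q R : ℝ²} (h : ccw P Q R) : ccw Q R P := by
  unfold ccw at *; linarith

lemma norm_sq_eq_coord (v : ℝ²) : ‖v‖ ^ 2 = v 0 ^ 2 + v 1 ^ 2 := by
  simp [EuclideanSpace.norm_sq_eq, Fin.sum_univ_two]

lemma inner_eq_coord (u v : ℝ²) : ⟪u, v⟫ = u 0 * v 0 + u 1 * v 1 := by
  simp [PiLp.inner_apply, Fin.sum_univ_two, mul_comm]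

/-- The energy `∫_T ‖∇f‖²` of the affine `f` on a triangle `T` with edge vectors `u, v` issuing
from one vertex, along which `f` increases by `a` and `b`: by Cramer's rule `cross u v • ∇f` is
`a • v - b • u` turned by a right angle. -/
noncomputable def triEnergy (u v : ℝ²) (a b : ℝ) : ℝ := ‖a • v - b • u‖ ^ 2 / (2 * |cross u v|)

lemma norm_sq_mul_cross_sq {g u v : ℝ²} {a b : ℝ} (hu : ⟪g, u⟫ = a) (hv : ⟪g, v⟫ = b) :
    ‖g‖ ^ 2 * cross u v ^ 2 = ‖a • v - b • u‖ ^ 2 := by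
  subst hu hv
  simp only [inner_eq_coord, norm_sq_eq_coord, cross, PiLp.sub_apply, PiLp.smul_apply, smul_eq_mul]
  ring

lemma IsGradient.norm_sq_mul_triArea {f : ℝ² →ᵃ[ℝ] ℝ} {g : ℝ²} (hg : IsGradient f g)
    (P Q R : ℝ²) :
    ‖g‖ ^ 2 * triArea P Q R = triEnergy (Q - P) (R - P) (f Q - f P) (f R - f P) := by
  have hinner (X : ℝ²) : ⟪g, X - P⟫ = f X - f P := by
    rw [← hg, ← vsub_eq_sub, f.linearMap_vsub]; rfl
  have hsq := norm_sq_mul_cross_sq (hinner Q) (hinner R)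
  rw [triArea_eq_abs_cross, triEnergy, ← hsq, ← sq_abs (cross _ _)]
  rcases (abs_nonneg (cross (Q - P) (R - P))).eq_or_lt with h | h
  · simp [← h]
  · field_simp

/-- For counterclockwise `0, p, r`, positive exactly when `q` lies outside their circumcircle. -/
noncomputable def outCircleDet (p q r : ℝ²) : ℝ :=
  cross p r * ‖q‖ ^ 2 - cross q r * ‖p‖ ^ 2 - cross p q * ‖r‖ ^ 2

lemma cross_mul_power_eq_outCircleDet {A B C D O : ℝ²} {ρ : ℝ} (hA : dist A O = ρ)
    (hB : dist B O = ρ) (hD : dist D O = ρ) :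
    cross (B - A) (D - A) * (dist C O ^ 2 - ρ ^ 2) = outCircleDet (B - A) (C - A) (D - A) := by
  subst hA
  have hB2 := congrArg (· ^ 2) hB
  have hD2 := congrArg (· ^ 2) hD
  simp only [outCircleDet, cross, dist_eq_norm, norm_sq_eq_coord, PiLp.sub_apply] at hB2 hD2 ⊢
  linear_combination (-(C 1 - A 1) * (D 0 - A 0) + (C 0 - A 0) * (D 1 - A 1)) * hB2 +
    ((B 0 - A 0) * (C 1 - A 1) - (B 1 - A 1) * (C 0 - A 0)) * hD2

lemma dist_circumCtr {A B C : ℝ²} (h : AffineIndependent ℝ ![A, B, C]) (i : Fin 3) :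
    dist (![A, B, C] i) (circumCtr h) = circumRad h :=
  (⟨![A, B, C], h⟩ : Affine.Simplex ℝ ℝ² 2).dist_circumcenter_eq_circumradius i

lemma energy_flip_identity (p q r : ℝ²) (b c d : ℝ) :
    cross q r * cross p r * cross (q - p) (r - p) * ‖b • q - c • p‖ ^ 2
      + cross p q * cross p r * cross (q - p) (r - p) * ‖c • r - d • q‖ ^ 2
      - cross p q * cross q r * cross (q - p) (r - p) * ‖b • r - d • p‖ ^ 2
      - cross p q * cross q r * cross p r * ‖(c - b) • (r - p) - (d - b) • (q - p)‖ ^ 2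
    = outCircleDet p q r * (c * cross p r - b * cross q r - d * cross p q) ^ 2 := by
  simp only [outCircleDet, norm_sq_eq_coord, cross, PiLp.sub_apply, PiLp.smul_apply, smul_eq_mul]
  ring

lemma triEnergy_flip_le {p q r : ℝ²} {b c d : ℝ} (hpq : 0 < cross p q) (hqr : 0 < cross q r)
    (hpr : 0 < cross p r) (hqrp : 0 < cross (q - p) (r - p)) (hout : 0 ≤ outCircleDet p q r) :
    triEnergy p r b d + triEnergy (q - p) (r - p) (c - b) (d - b) ≤
      triEnergy p q b c + triEnergy q r c d := by
  have hgap : triEnergy p q b c + triEnergy q r c d - triEnergy p r b d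
      - triEnergy (q - p) (r - p) (c - b) (d - b) =
      outCircleDet p q r * (c * cross p r - b * cross q r - d * cross p q) ^ 2 /
        (2 * (cross p q * cross q r * cross p r * cross (q - p) (r - p))) := by
    rw [← energy_flip_identity]
    simp only [triEnergy, abs_of_pos hpq, abs_of_pos hqr, abs_of_pos hpr, abs_of_pos hqrp]
    field_simp
  have : 0 ≤ outCircleDet p q r * (c * cross p r - b * cross q r - d * cross p q) ^ 2 /
        (2 * (cross p q * cross q r * cross p r * cross (q - p) (r - p))) := by positivity
  linarith

/-- Rippa's lemma, four-point case: if `BD` is the Delaunay diagonal of the convex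
quadrilateral `ABCD`, then for any vertex values `Y` the Dirichlet energy
`DF(t, Y) = ∫_Q ‖∇f_t‖²` (written triangle-by-triangle as `‖∇f‖²·area`, since the
gradient of the piecewise-linear interpolant is constant on each triangle) satisfies
`DF(t_BD, Y) ≤ DF(t_AC, Y)`. -/
theorem rippa_four_point (A B C D : EuclideanSpace ℝ (Fin 2))
    (hconv : ccw A B C ∧ ccw B C D ∧ ccw C D A ∧ ccw D A B)
    (hABD : AffineIndependent ℝ ![A, B, D])
    (hDel : dist C (circumCtr hABD) > circumRad hABD)
    (yA yB yC yD : ℝ)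
    (fABD fBCD fABC fACD : EuclideanSpace ℝ (Fin 2) →ᵃ[ℝ] ℝ)
    (gABD gBCD gABC gACD : EuclideanSpace ℝ (Fin 2))
    (hfABD : fABD A = yA ∧ fABD B = yB ∧ fABD D = yD)
    (hfBCD : fBCD B = yB ∧ fBCD C = yC ∧ fBCD D = yD)
    (hfABC : fABC A = yA ∧ fABC B = yB ∧ fABC C = yC)
    (hfACD : fACD A = yA ∧ fACD C = yC ∧ fACD D = yD)
    (hgABD : IsGradient fABD gABD) (hgBCD : IsGradient fBCD gBCD)
    (hgABC : IsGradient fABC gABC) (hgACD : IsGradient fACD gACD) :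
    ‖gABD‖ ^ 2 * triArea A B D + ‖gBCD‖ ^ 2 * triArea B C D ≤
      ‖gABC‖ ^ 2 * triArea A B C + ‖gACD‖ ^ 2 * triArea A C D := by
  obtain ⟨hABC, hBCD, hCDA, hDAB⟩ := hconv
  have hA : dist A (circumCtr hABD) = circumRad hABD := dist_circumCtr hABD 0
  have hB : dist B (circumCtr hABD) = circumRad hABD := dist_circumCtr hABD 1
  have hD : dist D (circumCtr hABD) = circumRad hABD := dist_circumCtr hABD 2
  have hout : 0 ≤ outCircleDet (B - A) (C - A) (D - A) := by
    rw [← cross_mul_power_eq_outCircleDet hA hB hD]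
    exact mul_nonneg hDAB.rotate.le (sub_nonneg.2 (pow_le_pow_left₀ (hA ▸ dist_nonneg) hDel.le 2))
  rw [hgABD.norm_sq_mul_triArea, hgBCD.norm_sq_mul_triArea, hgABC.norm_sq_mul_triArea,
    hgACD.norm_sq_mul_triArea]
  simp only [hfABD, hfBCD, hfABC, hfACD]
  rw [← sub_sub_sub_cancel_right C B A, ← sub_sub_sub_cancel_right D B A,
    ← sub_sub_sub_cancel_right yC yB yA, ← sub_sub_sub_cancel_right yD yB yA]
  rw [ccw_iff_cross, ← sub_sub_sub_cancel_right C B A, ← sub_sub_sub_cancel_right D B A] at hBCD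
  exact triEnergy_flip_le hABC hCDA.rotate.rotate hDAB.rotate hBCD hout
end

section
/- Let x₁, ..., x₄ be four points in ℝ² in convex position admitting two triangulations t₁, t₂ of their convex hull, and for values Y = (y₁,...,y₄) let B(Y) = DF(t₁, Y) − DF(t₂, Y), where DF(t, Y) = Σ_{Δ ∈ t} (area of lifted triangle over Δ)²/area(Δ). Then B(Y) = c·L(Y)² for some constant c depending only on the points and some linear form L in Y; in particular B(Y) has constant sign, so the optimal triangulation does not depend on Y. -/
/-- The area of the lifted triangle in ℝ³ with vertices `(A, yA)`, `(B, yB)`, `(C, yC)`: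
half the norm of the cross product of the lifted edge vectors. -/
noncomputable def liftArea (A B C : EuclideanSpace ℝ (Fin 2)) (yA yB yC : ℝ) : ℝ :=
  Real.sqrt (((B 1 - A 1) * (yC - yA) - (yB - yA) * (C 1 - A 1)) ^ 2 +
      ((yB - yA) * (C 0 - A 0) - (B 0 - A 0) * (yC - yA)) ^ 2 +
      ((B 0 - A 0) * (C 1 - A 1) - (B 1 - A 1) * (C 0 - A 0)) ^ 2) / 2

/-- The discrete Dirichlet functional of a triangulation of the quadrilateral `PQRS`
into the two triangles `PQR`, `PRS`, with heights `y`. -/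
noncomputable def DF2 (P Q R S : EuclideanSpace ℝ (Fin 2)) (yP yQ yR yS : ℝ) : ℝ :=
  liftArea P Q R yP yQ yR ^ 2 / triArea P Q R + liftArea P R S yP yR yS ^ 2 / triArea P R S

theorem norm_sq_div_add_norm_sq_div {E : Type*} [NormedAddCommGroup E] [InnerProductSpace ℝ E]
    {a b : ℝ} (ha : a ≠ 0) (hb : b ≠ 0) (hab : a + b ≠ 0) (u v : E) :
    ‖u‖ ^ 2 / a + ‖v‖ ^ 2 / b =
      ‖u + v‖ ^ 2 / (a + b) + ‖b • u - a • v‖ ^ 2 / (a * b * (a + b)) := by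
  rw [norm_add_sq_real, norm_sub_sq_real, norm_smul, norm_smul, real_inner_smul_left,
    real_inner_smul_right, mul_pow, mul_pow, Real.norm_eq_abs, Real.norm_eq_abs, sq_abs, sq_abs]
  field_simp
  ring

theorem EuclideanSpace.norm_sq_vec2 (a b : ℝ) : ‖!₂[a, b]‖ ^ 2 = a ^ 2 + b ^ 2 := by
  simp [EuclideanSpace.real_norm_sq_eq]

section Quadrilateral

variable (A B C P Q R S : EuclideanSpace ℝ (Fin 2)) (yA yB yC yP yQ yR yS : ℝ)

def orient : ℝ := (B 0 - A 0) * (C 1 - A 1) - (B 1 - A 1) * (C 0 - A 0)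

def liftNormal : EuclideanSpace ℝ (Fin 2) :=
  !₂[(B 1 - A 1) * (yC - yA) - (yB - yA) * (C 1 - A 1),
    (yB - yA) * (C 0 - A 0) - (B 0 - A 0) * (yC - yA)]

def liftDet : ℝ :=
  orient Q R S * yP - orient P R S * yQ + orient P Q S * yR - orient P Q R * yS

theorem orient_rotate : orient B C A = orient A B C := by
  unfold orient; ring

theorem orient_add_orient : orient P Q R + orient P R S = orient Q R S + orient Q S P := by
  unfold orient; ring

theorem liftNormal_add_liftNormal :
    liftNormal P Q R yP yQ yR + liftNormal P R S yP yR yS =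
      liftNormal Q R S yQ yR yS + liftNormal Q S P yQ yS yP := by
  ext i; fin_cases i <;> simp only [liftNormal, Fin.zero_eta, Fin.mk_one, PiLp.add_apply,
    Matrix.cons_val_zero, Matrix.cons_val_one, Matrix.cons_val_fin_one] <;> ring

theorem orient_smul_liftNormal_sub :
    orient P R S • liftNormal P Q R yP yQ yR - orient P Q R • liftNormal P R S yP yR yS =
      liftDet P Q R S yP yQ yR yS • !₂[R 1 - P 1, P 0 - R 0] := by
  ext i; fin_cases i <;> simp only [liftNormal, liftDet, orient, Fin.zero_eta, Fin.mk_one,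
    PiLp.sub_apply, PiLp.smul_apply, smul_eq_mul, Matrix.cons_val_zero, Matrix.cons_val_one,
    Matrix.cons_val_fin_one] <;> ring

theorem liftDet_rotate : liftDet Q R S P yQ yR yS yP = -liftDet P Q R S yP yQ yR yS := by
  unfold liftDet orient; ring

theorem liftArea_sq :
    liftArea A B C yA yB yC ^ 2 = (‖liftNormal A B C yA yB yC‖ ^ 2 + orient A B C ^ 2) / 4 := by
  rw [liftArea, div_pow, Real.sq_sqrt (by positivity), liftNormal, EuclideanSpace.norm_sq_vec2,
    orient]
  norm_num

variable {A B C P Q R S}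

theorem ccw.rotate_s18 (h : ccw B C A) : ccw A B C := by
  rwa [ccw, ← orient, ← orient_rotate]

theorem liftArea_sq_div_triArea (h : ccw A B C) :
    liftArea A B C yA yB yC ^ 2 / triArea A B C =
      (‖liftNormal A B C yA yB yC‖ ^ 2 / orient A B C + orient A B C) / 2 := by
  have h' : 0 < orient A B C := h
  rw [liftArea_sq, triArea, ← orient, abs_of_pos h']
  field_simp
  ring

theorem DF2_eq (hPQR : ccw P Q R) (hPRS : ccw P R S) :
    DF2 P Q R S yP yQ yR yS =
      (‖liftNormal P Q R yP yQ yR + liftNormal P R S yP yR yS‖ ^ 2 / (orient P Q R + orient P R S) +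
        liftDet P Q R S yP yQ yR yS ^ 2 * ‖R - P‖ ^ 2 /
          (orient P Q R * orient P R S * (orient P Q R + orient P R S)) +
        (orient P Q R + orient P R S)) / 2 := by
  have h₁ : 0 < orient P Q R := hPQR
  have h₂ : 0 < orient P R S := hPRS
  have hdiag : ‖(!₂[R 1 - P 1, P 0 - R 0] : EuclideanSpace ℝ (Fin 2))‖ ^ 2 = ‖R - P‖ ^ 2 := by
    rw [EuclideanSpace.norm_sq_vec2, EuclideanSpace.real_norm_sq_eq, Fin.sum_univ_two]
    simp only [PiLp.sub_apply]
    ring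
  rw [DF2, liftArea_sq_div_triArea _ _ _ hPQR, liftArea_sq_div_triArea _ _ _ hPRS, ← add_div,
    add_add_add_comm, norm_sq_div_add_norm_sq_div h₁.ne' h₂.ne' (add_pos h₁ h₂).ne',
    orient_smul_liftNormal_sub, norm_smul, mul_pow, Real.norm_eq_abs, sq_abs, hdiag]

theorem DF2_sub_DF2 (hPQR : ccw P Q R) (hQRS : ccw Q R S) (hRSP : ccw R S P)
    (hSPQ : ccw S P Q) :
    DF2 P Q R S yP yQ yR yS - DF2 Q R S P yQ yR yS yP =
      (‖R - P‖ ^ 2 / (orient P Q R * orient P R S * (orient P Q R + orient P R S)) -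
          ‖S - Q‖ ^ 2 / (orient Q R S * orient Q S P * (orient P Q R + orient P R S))) / 2 *
        liftDet P Q R S yP yQ yR yS ^ 2 := by
  rw [DF2_eq _ _ _ _ hPQR hRSP.rotate_s18, DF2_eq _ _ _ _ hQRS hSPQ.rotate_s18,
    liftNormal_add_liftNormal, ← orient_add_orient P Q R S, liftDet_rotate P Q R S, neg_sq]
  ring

end Quadrilateral

def liftDetForm (x : Fin 4 → EuclideanSpace ℝ (Fin 2)) : (Fin 4 → ℝ) →ₗ[ℝ] ℝ where
  toFun Y := liftDet (x 0) (x 1) (x 2) (x 3) (Y 0) (Y 1) (Y 2) (Y 3)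
  map_add' Y Z := by simp only [liftDet, Pi.add_apply]; ring
  map_smul' t Y := by simp only [liftDet, Pi.smul_apply, smul_eq_mul, RingHom.id_apply]; ring

/-- For four points in convex position, the difference of the discrete Dirichlet
functionals of the two triangulations of their convex hull is `c·L(Y)²` for a constant
`c` and a linear form `L` in the heights `Y`; in particular the optimal triangulation
does not depend on `Y`. -/
theorem dirichlet_difference_is_square (x : Fin 4 → EuclideanSpace ℝ (Fin 2))
    (hconv : ccw (x 0) (x 1) (x 2) ∧ ccw (x 1) (x 2) (x 3) ∧
      ccw (x 2) (x 3) (x 0) ∧ ccw (x 3) (x 0) (x 1)) :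
    ∃ (c : ℝ) (L : (Fin 4 → ℝ) →ₗ[ℝ] ℝ), ∀ Y : Fin 4 → ℝ,
      DF2 (x 0) (x 1) (x 2) (x 3) (Y 0) (Y 1) (Y 2) (Y 3) -
        DF2 (x 1) (x 2) (x 3) (x 0) (Y 1) (Y 2) (Y 3) (Y 0) = c * L Y ^ 2 := by
  obtain ⟨h₀₁₂, h₁₂₃, h₂₃₀, h₃₀₁⟩ := hconv
  exact ⟨_, liftDetForm x, fun Y => DF2_sub_DF2 _ _ _ _ h₀₁₂ h₁₂₃ h₂₃₀ h₃₀₁⟩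
end
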